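/- arXiv:1302.0318 — 8 statements merged into one kernel-verified Lean document; each statement's English description precedes it below -/
import Mathlib

section
/- If a graph G is uniquely colorable (has exactly one proper coloring with χ(G) colors up to permutation of colors), then every critical set for any optimal proper coloring of G has cardinality exactly χ(G) - 1. -/
open SimpleGraph Finset

/-- A proper `k`-coloring of a simple graph: adjacent vertices get distinct colors. -/
def properColoring {V : Type*} (G : SimpleGraph V) (k : ℕ) (c : V → Fin k) : Prop :=
  ∀ ⦃v w : V⦄, G.Adj v w → c v ≠ c w

/-- `S` is a determining set for `(G, c)`: `c` is the unique proper `k`-coloring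
agreeing with `c` on `S`. -/
def Determining {V : Type*} (G : SimpleGraph V) {k : ℕ} (c : V → Fin k) (S : Finset V) : Prop :=
  ∀ c' : V → Fin k, properColoring G k c' → (∀ v ∈ S, c' v = c v) → c' = c

/-- A critical set: an inclusion-minimal determining set. -/
def CriticalSet {V : Type*} (G : SimpleGraph V) {k : ℕ} (c : V → Fin k) (S : Finset V) : Prop :=
  Determining G c S ∧ ∀ T : Finset V, T ⊂ S → ¬ Determining G c T

/-- The cycle graph on `Fin n`, with `i` adjacent to `i ± 1` (mod `n`). -/
def cycGraph (n : ℕ) [NeZero n] : SimpleGraph (Fin n) :=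
  SimpleGraph.fromRel (fun i j => i + 1 = j)

/-- A vertex is colorful if every color appears on its closed neighborhood. -/
def Colorful {V : Type*} (G : SimpleGraph V) {k : ℕ} (c : V → Fin k) (v : V) : Prop :=
  ∀ a : Fin k, ∃ w : V, (w = v ∨ G.Adj v w) ∧ c w = a

/-- `G` is uniquely `k`-colorable: any two proper `k`-colorings differ by a permutation
of the colors. -/
def UniquelyColorable {V : Type*} (G : SimpleGraph V) (k : ℕ) : Prop :=
  ∀ c c' : V → Fin k, properColoring G k c → properColoring G k c' →
    ∃ π : Equiv.Perm (Fin k), c' = π ∘ c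

theorem stmt0 {V : Type*} [Fintype V] (G : SimpleGraph V) (k : ℕ)
    (hχ : G.chromaticNumber = k) (huc : UniquelyColorable G k)
    (c : V → Fin k) (hc : properColoring G k c)
    (S : Finset V) (hS : CriticalSet G c S) : S.card = k - 1 := by
  classical
  rcases Nat.eq_zero_or_pos k with hk | hk
  · subst hk
    haveI : IsEmpty V := Function.isEmpty c
    simp [Finset.eq_empty_of_isEmpty S]
  -- c is surjective, since χ(G) = k
  have hsurj : Function.Surjective c := by
    by_contra h
    unfold Function.Surjective at h
    push_neg at h
    obtain ⟨a, ha⟩ := h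
    have hcol : G.Colorable (k - 1) := by
      have hcardeq : Fintype.card {b : Fin k // b ≠ a} = k - 1 := by
        rw [Fintype.card_subtype_compl]
        simp
      have e : {b : Fin k // b ≠ a} ≃ Fin (k - 1) := Fintype.equivFinOfCardEq hcardeq
      refine ⟨SimpleGraph.Coloring.mk (fun v => e ⟨c v, ha v⟩) ?_⟩
      intro v w hadj hvw
      have := e.injective hvw
      exact hc hadj (by simpa using congrArg Subtype.val this)
    have hle := hcol.chromaticNumber_le
    rw [hχ] at hle
    have : k ≤ k - 1 := by exact_mod_cast hle
    omega
  -- If the image of T has at least k-1 colors, then T is determining.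
  have detB : ∀ T : Finset V, (k - 1 : ℕ) ≤ (T.image c).card → Determining G c T := by
    intro T hT c' hc' hagree
    obtain ⟨π, hπ⟩ := huc c c' hc hc'
    have hfix : ∀ a ∈ T.image c, π a = a := by
      intro a ha
      obtain ⟨v, hv, rfl⟩ := Finset.mem_image.mp ha
      have h1 := hagree v hv
      rw [hπ] at h1
      exact h1
    have hid : ∀ a : Fin k, π a = a := by
      intro a
      by_cases ha : a ∈ T.image c
      · exact hfix a ha
      · have hπa : π a ∉ T.image c := by
          intro h
          have h2 := hfix (π a) h
          have h3 : π a = a := π.injective h2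
          exact ha (h3 ▸ h)
        have hcard : (Finset.univ \ T.image c).card ≤ 1 := by
          have h1 : (T.image c).card ≤ k := by
            have := Finset.card_le_univ (T.image c)
            simpa using this
          have h2 := Finset.card_sdiff_of_subset (Finset.subset_univ (T.image c))
          simp only [Finset.card_univ, Fintype.card_fin] at h2
          omega
        have ha' : a ∈ Finset.univ \ T.image c := by simp [ha]
        have hπa' : π a ∈ Finset.univ \ T.image c := by simp [hπa]
        exact Finset.card_le_one.mp hcard _ hπa' _ ha'
    funext v
    rw [hπ]
    exact hid (c v)
  -- If T is determining, then its image has at least k-1 colors.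
  have detA : ∀ T : Finset V, Determining G c T → (k - 1 : ℕ) ≤ (T.image c).card := by
    intro T hT
    by_contra h
    push_neg at h
    have hcard : 2 ≤ (Finset.univ \ T.image c).card := by
      have h2 := Finset.card_sdiff_of_subset (Finset.subset_univ (T.image c))
      simp only [Finset.card_univ, Fintype.card_fin] at h2
      omega
    obtain ⟨a, ha, b, hb, hab⟩ := Finset.one_lt_card.mp (show 1 < (Finset.univ \ T.image c).card by omega)
    set π := Equiv.swap a b with hπdef
    have hproper : properColoring G k (π ∘ c) := fun v w hadj hvw => hc hadj (π.injective hvw)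
    have hagree : ∀ v ∈ T, (π ∘ c) v = c v := by
      intro v hv
      have h1 : c v ≠ a := fun h => (Finset.mem_sdiff.mp ha).2 (h ▸ Finset.mem_image_of_mem c hv)
      have h2 : c v ≠ b := fun h => (Finset.mem_sdiff.mp hb).2 (h ▸ Finset.mem_image_of_mem c hv)
      simp [hπdef, Equiv.swap_apply_of_ne_of_ne h1 h2]
    have heq := hT _ hproper hagree
    obtain ⟨v, hv⟩ := hsurj a
    have h3 : (π ∘ c) v = c v := congrFun heq v
    rw [Function.comp_apply, hv] at h3
    simp [hπdef, Equiv.swap_apply_left] at h3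
    exact hab h3.symm
  have hge : k - 1 ≤ (S.image c).card := detA S hS.1
  have hinj : Set.InjOn c S := by
    intro v hv w hw hvw
    by_contra hne
    have hv' : v ∈ S := Finset.mem_coe.mp hv
    have hw' : w ∈ S := Finset.mem_coe.mp hw
    apply hS.2 (S.erase v) (Finset.erase_ssubset hv')
    apply detB
    have himg : (S.erase v).image c = S.image c := by
      apply Finset.Subset.antisymm (Finset.image_subset_image (Finset.erase_subset _ _))
      intro a ha
      obtain ⟨u, hu, rfl⟩ := Finset.mem_image.mp ha
      by_cases huv : u = v
      · subst huv
        exact Finset.mem_image.mpr ⟨w, Finset.mem_erase.mpr ⟨fun h => hne h.symm, hw'⟩, hvw.symm⟩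
      · exact Finset.mem_image.mpr ⟨u, Finset.mem_erase.mpr ⟨huv, hu⟩, rfl⟩
    rw [himg]
    exact hge
  have hle : (S.image c).card ≤ k - 1 := by
    by_contra h
    push_neg at h
    have hk' : k ≤ (S.image c).card := by omega
    have hne : S.Nonempty := by
      rcases S.eq_empty_or_nonempty with rfl | h'
      · simp at hk'; omega
      · exact h'
    obtain ⟨v, hv⟩ := hne
    apply hS.2 (S.erase v) (Finset.erase_ssubset hv)
    apply detB
    have hsub : S.image c ⊆ insert (c v) ((S.erase v).image c) := by
      intro a ha
      obtain ⟨u, hu, rfl⟩ := Finset.mem_image.mp ha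
      by_cases huv : u = v
      · subst huv; exact Finset.mem_insert_self _ _
      · exact Finset.mem_insert_of_mem
          (Finset.mem_image.mpr ⟨u, Finset.mem_erase.mpr ⟨huv, hu⟩, rfl⟩)
    have h1 := Finset.card_le_card hsub
    have h2 := Finset.card_insert_le (c v) ((S.erase v).image c)
    omega
  have himg : (S.image c).card = k - 1 := le_antisymm hle hge
  rw [← Finset.card_image_of_injOn hinj, himg]
end

section
/- For n odd, n ≥ 3, the minimum over all proper 3-colorings c of C_n of the minimum size of a critical set for c equals (n+1)/2. That is, SCS_min(C_n) = (n+1)/2. -/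
/-!
If two consecutive vertices `v, v + 1` of the cycle lie outside `S`, the path
`v - 1, v, v + 1, v + 2` with its ends fixed has a second proper 3-coloring, so `S` is not
determining. Hence `i ↦ i + 1` maps the complement of a determining set injectively into it, and
`|S| ≥ ⌈n / 2⌉`. Conversely, for `n = 2m + 1` color the even positions so that the two neighbors
of every odd position get different colors; then the `m + 1` even positions force each odd vertex
to take the remaining color, and by the bound this determining set is critical.
-/

open SimpleGraph Finset

lemma Determining.of_forall_colorful {V : Type*} {G : SimpleGraph V} {k : ℕ} {c : V → Fin k}
    {S : Finset V} (hS : ∀ v ∉ S, ∀ w, G.Adj v w → w ∈ S) (hc : ∀ v ∉ S, Colorful G c v) :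
    Determining G c S := by
  intro c' hc' hagree
  funext v
  by_cases hv : v ∈ S
  · exact hagree v hv
  obtain ⟨w, rfl | hvw, hw⟩ := hc v hv (c' v)
  · exact hw.symm
  · exact absurd (hw ▸ hagree w (hS v hv w hvw)) (hc' hvw).symm

lemma CriticalSet.of_forall_card_le {V : Type*} {G : SimpleGraph V} {k : ℕ} {c : V → Fin k}
    {S : Finset V} (hS : Determining G c S) (hmin : ∀ T, Determining G c T → #S ≤ #T) :
    CriticalSet G c S :=
  ⟨hS, fun T hTS hT => (hmin T hT).not_gt (card_lt_card hTS)⟩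

lemma Fin.exists_ne_path_coloring (a b x y : Fin 3) (hx : x ≠ a) (hxy : x ≠ y) (hy : y ≠ b) :
    ∃ x' y' : Fin 3, x' ≠ a ∧ x' ≠ y' ∧ y' ≠ b ∧ (x', y') ≠ (x, y) := by
  revert a b x y; decide

lemma Fin.eq_or_eq_or_eq_of_ne (a b d e : Fin 3) (hab : a ≠ b) (had : a ≠ d) (hbd : b ≠ d) :
    e = a ∨ e = b ∨ e = d := by
  revert a b d e; decide

section Cycle

variable {n : ℕ} [NeZero n]

lemma cycGraph_adj {i j : Fin n} : (cycGraph n).Adj i j ↔ i ≠ j ∧ (i + 1 = j ∨ j + 1 = i) := by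
  simp [cycGraph]

lemma add_one_ne_self_of_two_le (hn : 2 ≤ n) (i : Fin n) : i + 1 ≠ i := by
  rw [Ne, add_eq_left, Fin.ext_iff, Fin.val_one', Fin.val_zero, Nat.one_mod_eq_zero_iff]
  omega

lemma add_one_add_one_ne_self_of_three_le (hn : 3 ≤ n) (i : Fin n) : i + 1 + 1 ≠ i := by
  rw [add_assoc, Ne, add_eq_left, Fin.ext_iff, Fin.val_add, Fin.val_one',
    Nat.mod_eq_of_lt (show 1 < n by omega), Nat.mod_eq_of_lt (show 1 + 1 < n by omega)]
  simp

lemma cycGraph_adj_add_one (hn : 2 ≤ n) (i : Fin n) : (cycGraph n).Adj i (i + 1) :=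
  cycGraph_adj.2 ⟨(add_one_ne_self_of_two_le hn i).symm, .inl rfl⟩

lemma properColoring_cycGraph_of_ne_add_one {k : ℕ} {c : Fin n → Fin k}
    (hc : ∀ i, c i ≠ c (i + 1)) : properColoring (cycGraph n) k c := by
  rintro i j hij
  obtain ⟨-, rfl | rfl⟩ := cycGraph_adj.1 hij
  · exact hc i
  · exact (hc j).symm

theorem Determining.add_one_mem (hn : 3 ≤ n) {c : Fin n → Fin 3}
    (hc : properColoring (cycGraph n) 3 c) {S : Finset (Fin n)}
    (hS : Determining (cycGraph n) c S) {v : Fin n} (hv : v ∉ S) : v + 1 ∈ S := by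
  by_contra hv1
  have adj := cycGraph_adj_add_one (n := n) (by omega)
  have add_one_ne := add_one_ne_self_of_two_le (n := n) (by omega)
  have add_two_ne := add_one_add_one_ne_self_of_three_le hn
  obtain ⟨x, y, hx, hxy, hy, hne⟩ := Fin.exists_ne_path_coloring (c (v - 1)) (c (v + 1 + 1))
    (c v) (c (v + 1)) (by simpa using (hc (adj (v - 1))).symm) (hc (adj v)) (hc (adj (v + 1)))
  set c' := Function.update (Function.update c v x) (v + 1) y
  have hc' : properColoring (cycGraph n) 3 c' := by
    refine properColoring_cycGraph_of_ne_add_one fun i => ?_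
    by_cases hi : i = v
    · subst hi; simpa [c', (add_one_ne i).symm] using hxy
    by_cases hi1 : i = v + 1
    · subst hi1; simpa [c', add_one_ne (v + 1), add_two_ne v] using hy
    by_cases hi2 : i + 1 = v
    · subst hi2
      simpa [c', (add_one_ne i).symm, (add_two_ne i).symm, (add_one_ne (i + 1)).symm] using hx.symm
    simpa [c', hi, hi1, hi2] using hc (adj i)
  have hc'_eq : c' = c := hS c' hc' fun w hw => by
    simp [c', ne_of_mem_of_not_mem hw hv, ne_of_mem_of_not_mem hw hv1]
  apply hne
  rw [← hc'_eq]
  simp [c', (add_one_ne v).symm]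

lemma half_le_card_of_add_one_mem {S : Finset (Fin n)} (hS : ∀ v ∉ S, v + 1 ∈ S) :
    (n + 1) / 2 ≤ #S := by
  have hcompl : #Sᶜ ≤ #S := card_le_card_of_injOn (· + 1) (fun v hv => hS v (by simpa using hv))
    (add_left_injective 1).injOn
  have := card_add_card_compl S
  rw [Fintype.card_fin] at this
  omega

theorem Determining.half_le_card (hn : 3 ≤ n) {c : Fin n → Fin 3}
    (hc : properColoring (cycGraph n) 3 c) {S : Finset (Fin n)}
    (hS : Determining (cycGraph n) c S) : (n + 1) / 2 ≤ #S :=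
  half_le_card_of_add_one_mem fun _ hv => hS.add_one_mem hn hc hv

lemma colorful_cycGraph (hn : 2 ≤ n) {c : Fin n → Fin 3} (hc : properColoring (cycGraph n) 3 c)
    {v : Fin n} (hv : c (v - 1) ≠ c (v + 1)) : Colorful (cycGraph n) c v := by
  have adj := cycGraph_adj_add_one hn
  have adj' : (cycGraph n).Adj v (v - 1) := by simpa using (adj (v - 1)).symm
  intro a
  rcases Fin.eq_or_eq_or_eq_of_ne _ _ _ a (hc adj').symm hv (hc (adj v)) with h | h | h
  · exact ⟨v - 1, .inr adj', h.symm⟩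
  · exact ⟨v, .inl rfl, h.symm⟩
  · exact ⟨v + 1, .inr (adj v), h.symm⟩

end Cycle

/-- The even positions `2 * i < 2 * m` alternate between the colors `0` and `1`, the position
`2 * m` gets `2`, and every odd position gets the color missing from its two neighbors. -/
def oddCycleColoring (m j : ℕ) : Fin 3 :=
  if j = 2 * m then 2
  else if j % 2 = 0 then (if j / 2 % 2 = 0 then 0 else 1)
  else if j + 1 = 2 * m then (if m % 2 = 0 then 0 else 1)
  else 2

lemma oddCycleColoring_ne_add_one {m j : ℕ} (hj : j < 2 * m) :
    oddCycleColoring m j ≠ oddCycleColoring m (j + 1) := by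
  unfold oddCycleColoring
  split_ifs <;> first | decide | omega

lemma oddCycleColoring_two_mul_ne_zero {m : ℕ} (hm : 1 ≤ m) :
    oddCycleColoring m (2 * m) ≠ oddCycleColoring m 0 := by
  unfold oddCycleColoring
  split_ifs <;> first | decide | omega

lemma oddCycleColoring_sub_one_ne_add_one {m j : ℕ} (hj : j % 2 = 1) (hjm : j < 2 * m) :
    oddCycleColoring m (j - 1) ≠ oddCycleColoring m (j + 1) := by
  unfold oddCycleColoring
  split_ifs <;> first | decide | omega

theorem exists_determining_card_eq_of_odd {m : ℕ} (hm : 1 ≤ m) :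
    ∃ (c : Fin (2 * m + 1) → Fin 3) (S : Finset (Fin (2 * m + 1))),
      properColoring (cycGraph (2 * m + 1)) 3 c ∧ Determining (cycGraph (2 * m + 1)) c S ∧
        #S = m + 1 := by
  let c : Fin (2 * m + 1) → Fin 3 := fun i => oddCycleColoring m i
  let S := (univ : Finset (Fin (m + 1))).image
    fun i : Fin (m + 1) => (⟨2 * i.val, by omega⟩ : Fin (2 * m + 1))
  have hc : properColoring (cycGraph (2 * m + 1)) 3 c := by
    refine properColoring_cycGraph_of_ne_add_one fun i => ?_
    simp only [c, Fin.val_add_one]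
    split_ifs with hi
    · simpa [hi] using oddCycleColoring_two_mul_ne_zero hm
    · exact oddCycleColoring_ne_add_one (Fin.val_lt_last hi)
  have mem_S : ∀ w : Fin (2 * m + 1), w.val % 2 = 0 → w ∈ S := fun w hw =>
    mem_image.2 ⟨⟨w / 2, by omega⟩, mem_univ _,
      Fin.ext (Nat.mul_div_cancel' (Nat.dvd_of_mod_eq_zero hw))⟩
  have odd_of_not_mem : ∀ v ∉ S, v.val % 2 = 1 := fun v hv => by
    by_contra h; exact hv (mem_S v (by omega))
  have val_add_one : ∀ v ∉ S, (v + 1).val = v.val + 1 := fun v hv => by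
    have := odd_of_not_mem v hv
    rw [Fin.val_add_one, if_neg]
    rintro rfl; simp at this
  have val_sub_one : ∀ v ∉ S, (v - 1).val = v.val - 1 := fun v hv => by
    have := odd_of_not_mem v hv
    exact Fin.val_sub_one_of_ne_zero fun h => by simp [h] at this
  refine ⟨c, S, hc, Determining.of_forall_colorful (fun v hv w hvw => ?_) (fun v hv => ?_), ?_⟩
  · have := odd_of_not_mem v hv
    obtain ⟨-, rfl | hw⟩ := cycGraph_adj.1 hvw
    · exact mem_S _ (by rw [val_add_one v hv]; omega)
    · rw [eq_sub_of_add_eq hw]; exact mem_S _ (by rw [val_sub_one v hv]; omega)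
  · refine colorful_cycGraph (by omega) hc ?_
    simp only [c, val_add_one v hv, val_sub_one v hv]
    exact oddCycleColoring_sub_one_ne_add_one (odd_of_not_mem v hv)
      (by have := v.isLt; have := odd_of_not_mem v hv; omega)
  · rw [card_image_of_injective _ fun i j hij => Fin.ext (by simpa using hij), card_univ,
      Fintype.card_fin]

theorem stmt6 (n : ℕ) [NeZero n] (hn : Odd n) (h3 : 3 ≤ n) :
    IsLeast {m : ℕ | ∃ (c : Fin n → Fin 3) (S : Finset (Fin n)),
      properColoring (cycGraph n) 3 c ∧ CriticalSet (cycGraph n) c S ∧ S.card = m}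
      ((n + 1) / 2) := by
  refine ⟨?_, fun _ ⟨c, S, hc, hS, hcard⟩ => hcard ▸ hS.1.half_le_card h3 hc⟩
  obtain ⟨m, rfl⟩ := hn
  obtain ⟨c, S, hc, hS, hcard⟩ := exists_determining_card_eq_of_odd (m := m) (by omega)
  have hm : (2 * m + 1 + 1) / 2 = m + 1 := by omega
  refine ⟨c, S, hc, .of_forall_card_le hS fun T hT => ?_, hcard.trans hm.symm⟩
  exact hcard ▸ hm ▸ hT.half_le_card h3 hc
end

section
/- For n odd, the minimum over all proper 3-colorings c of C_n of the maximum size of a critical set for c equals (n+3)/2 if n ≡ 1 (mod 4), and equals (n+1)/2 if n ≡ 3 (mod 4). -/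
open SimpleGraph Finset

/-!
A vertex of the cycle is forced by `c` when its two neighbours have different colours. A set `S`
determines `c` iff every vertex outside `S` is forced and has both neighbours in `S`, so `S` is
critical iff its complement `T` is an independent set of forced vertices dominating every forced
vertex; the largest critical set has `n - min |T|` elements.

Such a `T` with `2 |T| < n` always exists: a colour class if every vertex is forced, otherwise
the greedy choice of `⌈L / 3⌉` vertices in each run of `L` consecutive forced vertices. For
`n ≡ 1 [MOD 4]` the greedy set has fewer than `(n - 1) / 2` elements, since otherwise it would
occupy every second vertex and following the colours once around the cycle gives a contradiction.
For the colouring `0, 1, 2, 1, 0, 1, 2, 1, …, 2` every such `T` has at least `(n - 3) / 2`,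
resp. `(n - 1) / 2`, elements.
-/

section General

variable {V : Type*} {G : SimpleGraph V} {k : ℕ} {c : V → Fin k}

lemma Determining.mono {S T : Finset V} (hS : Determining G c S) (hST : S ⊆ T) :
    Determining G c T :=
  fun c' hc' hagree => hS c' hc' fun v hv => hagree v (hST hv)

lemma criticalSet_iff_erase [DecidableEq V] {S : Finset V} :
    CriticalSet G c S ↔ Determining G c S ∧ ∀ v ∈ S, ¬ Determining G c (S.erase v) := by
  refine and_congr_right fun _ => ⟨fun h v hv => h _ (erase_ssubset hv), fun h T hTS hT => ?_⟩
  obtain ⟨v, hvS, hvT⟩ := exists_of_ssubset hTS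
  exact h v hvS (Determining.mono hT fun w hw => mem_erase.2 ⟨fun e => hvT (e ▸ hw), hTS.subset hw⟩)

lemma exists_colorClass_card_le [Fintype V] (f : V → Fin 3) :
    ∃ a, 3 * (univ.filter (f · = a)).card ≤ Fintype.card V := by
  by_contra! h
  have hsum := card_eq_sum_card_fiberwise (f := f) (s := univ) (t := univ) (by simp)
  rw [Fin.sum_univ_three, card_univ] at hsum
  have := h 0; have := h 1; have := h 2
  omega

end General

open Fin.CommRing

namespace CycleCriticalSet

variable {n : ℕ} [NeZero n]

lemma add_natCast_ne_self {k : ℕ} (hk0 : 0 < k) (hkn : k < n) (v : Fin n) : v + k ≠ v := by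
  rw [Ne, add_eq_left, Fin.natCast_eq_zero]
  exact Nat.not_dvd_of_pos_of_lt hk0 hkn

lemma add_one_ne_self (hn : 2 ≤ n) (v : Fin n) : v + 1 ≠ v := by
  simpa using add_natCast_ne_self (k := 1) one_pos hn v

lemma sub_one_ne_self (hn : 2 ≤ n) (v : Fin n) : v - 1 ≠ v :=
  fun h => add_one_ne_self hn (v - 1) (by rw [sub_add_cancel, h])

lemma add_two_ne_self (hn : 3 ≤ n) (v : Fin n) : v + 2 ≠ v := by
  simpa using add_natCast_ne_self (k := 2) two_pos hn v

lemma cycGraph_adj_iff {v w : Fin n} : (cycGraph n).Adj v w ↔ v ≠ w ∧ (v + 1 = w ∨ w + 1 = v) := by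
  simp [cycGraph, SimpleGraph.fromRel_adj]

lemma cycGraph_adj_add_one (hn : 2 ≤ n) (v : Fin n) : (cycGraph n).Adj v (v + 1) :=
  cycGraph_adj_iff.2 ⟨(add_one_ne_self hn v).symm, Or.inl rfl⟩

lemma properColoring_cycGraph_iff {k : ℕ} (hn : 2 ≤ n) {c : Fin n → Fin k} :
    properColoring (cycGraph n) k c ↔ ∀ v, c v ≠ c (v + 1) := by
  refine ⟨fun h v => h (cycGraph_adj_add_one hn v), fun h v w hvw => ?_⟩
  obtain ⟨-, rfl | rfl⟩ := cycGraph_adj_iff.1 hvw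
  exacts [h v, (h w).symm]

lemma apply_ne_apply_add_one {k : ℕ} (hn : 2 ≤ n) {c : Fin n → Fin k}
    (hc : properColoring (cycGraph n) k c) (v : Fin n) : c v ≠ c (v + 1) :=
  (properColoring_cycGraph_iff hn).1 hc v

lemma apply_ne_apply_sub_one {k : ℕ} (hn : 2 ≤ n) {c : Fin n → Fin k}
    (hc : properColoring (cycGraph n) k c) (v : Fin n) : c v ≠ c (v - 1) := by
  simpa using (apply_ne_apply_add_one hn hc (v - 1)).symm

lemma fin3_eq_of_ne : ∀ a b x y : Fin 3, a ≠ b → x ≠ a → x ≠ b → y ≠ a → y ≠ b → x = y := by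
  decide

lemma fin3_eq_or_eq_or_eq : ∀ a x y z : Fin 3, x ≠ y → y ≠ z → x ≠ z → x = a ∨ y = a ∨ z = a := by
  decide

lemma fin3_exists_ne : ∀ a b : Fin 3, ∃ x, x ≠ a ∧ x ≠ b := by
  decide

lemma fin3_exists_other_pair : ∀ a b x y : Fin 3, x ≠ a → y ≠ b → x ≠ y →
    ∃ x' y' : Fin 3, x' ≠ a ∧ y' ≠ b ∧ x' ≠ y' ∧ (x' ≠ x ∨ y' ≠ y) := by
  decide

def Forced (c : Fin n → Fin 3) (v : Fin n) : Prop := c (v - 1) ≠ c (v + 1)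

instance (c : Fin n → Fin 3) : DecidablePred (Forced c) :=
  fun v => inferInstanceAs (Decidable (c (v - 1) ≠ c (v + 1)))

variable {c : Fin n → Fin 3}

lemma exists_recolor_of_not_forced (hn : 2 ≤ n) (hc : properColoring (cycGraph n) 3 c) {v : Fin n}
    (hv : ¬ Forced c v) :
    ∃ c', properColoring (cycGraph n) 3 c' ∧ c' ≠ c ∧ ∀ w, w ≠ v → c' w = c w := by
  rw [Forced, not_not] at hv
  obtain ⟨x, hx₁, hx₂⟩ := fin3_exists_ne (c (v - 1)) (c v)
  refine ⟨Function.update c v x, ?_, fun h => hx₂ (by simpa using congrFun h v),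
    fun w hw => Function.update_of_ne hw _ _⟩
  rw [properColoring_cycGraph_iff (by omega)]
  intro w
  simp only [Function.update_apply]
  split_ifs with hw hw1 hw1
  · exact absurd (hw1.trans hw.symm) (add_one_ne_self (by omega) w)
  · subst hw; rw [← hv]; exact hx₁
  · obtain rfl : w = v - 1 := by rw [← hw1]; ring
    exact hx₁.symm
  · exact apply_ne_apply_add_one (by omega) hc w

lemma exists_recolor_edge (hn : 3 ≤ n) (hc : properColoring (cycGraph n) 3 c) (v : Fin n) :
    ∃ c', properColoring (cycGraph n) 3 c' ∧ c' ≠ c ∧ ∀ w, w ≠ v → w ≠ v + 1 → c' w = c w := by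
  obtain ⟨x, y, hx, hy, hxy, hne⟩ :=
    fin3_exists_other_pair (c (v - 1)) (c (v + 2)) (c v) (c (v + 1))
    (apply_ne_apply_sub_one (by omega) hc v)
    (by simpa [add_assoc, one_add_one_eq_two] using apply_ne_apply_add_one (by omega) hc (v + 1))
    (apply_ne_apply_add_one (by omega) hc v)
  set c' := Function.update (Function.update c v x) (v + 1) y
  have hc'v : c' v = x := by simp [c', (add_one_ne_self (by omega) v).symm]
  have hc'v1 : c' (v + 1) = y := by simp [c']
  have hc'w : ∀ w, w ≠ v → w ≠ v + 1 → c' w = c w := fun w hw hw1 => by simp [c', hw, hw1]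
  refine ⟨c', ?_, fun h => ?_, hc'w⟩
  · rw [properColoring_cycGraph_iff (by omega)]
    intro w
    by_cases hw : w = v
    · subst hw; rwa [hc'v, hc'v1]
    by_cases hw1 : w = v + 1
    · subst hw1
      rw [hc'v1, hc'w _ (by rw [add_assoc, one_add_one_eq_two]; exact add_two_ne_self hn v)
        (add_one_ne_self (by omega) _), add_assoc, one_add_one_eq_two]
      exact hy
    by_cases hw2 : w + 1 = v
    · obtain rfl : w = v - 1 := by rw [← hw2]; ring
      rw [hc'w _ hw hw1, hw2, hc'v]
      exact hx.symm
    rw [hc'w _ hw hw1, hc'w _ hw2 (fun h => hw (add_right_cancel h))]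
    exact apply_ne_apply_add_one (by omega) hc w
  · rcases hne with hne | hne
    · exact hne (by rw [← hc'v, h])
    · exact hne (by rw [← hc'v1, h])

lemma determining_iff (hn : 3 ≤ n) (hc : properColoring (cycGraph n) 3 c) {S : Finset (Fin n)} :
    Determining (cycGraph n) c S ↔ ∀ v ∉ S, Forced c v ∧ v - 1 ∈ S ∧ v + 1 ∈ S := by
  constructor
  · intro hS v hv
    refine ⟨by_contra fun hf => ?_, by_contra fun h1 => ?_, by_contra fun h1 => ?_⟩
    · obtain ⟨c', hc', hne, hagree⟩ := exists_recolor_of_not_forced (by omega) hc hf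
      exact hne (hS c' hc' fun w hw => hagree w (ne_of_mem_of_not_mem hw hv))
    · obtain ⟨c', hc', hne, hagree⟩ := exists_recolor_edge hn hc (v - 1)
      exact hne (hS c' hc' fun w hw =>
        hagree w (ne_of_mem_of_not_mem hw h1) (by simpa using ne_of_mem_of_not_mem hw hv))
    · obtain ⟨c', hc', hne, hagree⟩ := exists_recolor_edge hn hc v
      exact hne (hS c' hc' fun w hw =>
        hagree w (ne_of_mem_of_not_mem hw hv) (ne_of_mem_of_not_mem hw h1))
  · intro h c' hc' hagree
    funext v
    by_cases hv : v ∈ S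
    · exact hagree v hv
    obtain ⟨hf, h1, h2⟩ := h v hv
    refine fin3_eq_of_ne (c (v - 1)) (c (v + 1)) _ _ hf ?_ ?_
      (apply_ne_apply_sub_one (by omega) hc v) (apply_ne_apply_add_one (by omega) hc v)
    · rw [← hagree _ h1]; exact apply_ne_apply_sub_one (by omega) hc' v
    · rw [← hagree _ h2]; exact apply_ne_apply_add_one (by omega) hc' v

lemma determining_erase_iff (hn : 3 ≤ n) (hc : properColoring (cycGraph n) 3 c)
    {S : Finset (Fin n)} (hS : Determining (cycGraph n) c S) {w : Fin n} :
    Determining (cycGraph n) c (S.erase w) ↔ Forced c w ∧ w - 1 ∈ S ∧ w + 1 ∈ S := by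
  rw [determining_iff hn hc] at hS ⊢
  refine ⟨fun h => ?_, fun ⟨hf, h1, h2⟩ v hv => ?_⟩
  · obtain ⟨hf, h1, h2⟩ := h w (notMem_erase w S)
    exact ⟨hf, mem_of_mem_erase h1, mem_of_mem_erase h2⟩
  rw [mem_erase, not_and_or, not_not] at hv
  rcases hv with rfl | hv
  · exact ⟨hf, mem_erase.2 ⟨sub_one_ne_self (by omega) v, h1⟩,
      mem_erase.2 ⟨add_one_ne_self (by omega) v, h2⟩⟩
  obtain ⟨hf, hv1, hv2⟩ := hS v hv
  refine ⟨hf, mem_erase.2 ⟨fun e => hv ?_, hv1⟩, mem_erase.2 ⟨fun e => hv ?_, hv2⟩⟩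
  · simpa [← e] using h2
  · simpa [← e] using h1

structure IsForcedIndepDom (c : Fin n → Fin 3) (T : Finset (Fin n)) : Prop where
  indep : ∀ v ∈ T, v + 1 ∉ T
  forced : ∀ v ∈ T, Forced c v
  dominating : ∀ v, Forced c v → v ∈ T ∨ v - 1 ∈ T ∨ v + 1 ∈ T

theorem criticalSet_iff (hn : 3 ≤ n) (hc : properColoring (cycGraph n) 3 c) {S : Finset (Fin n)} :
    CriticalSet (cycGraph n) c S ↔ IsForcedIndepDom c Sᶜ := by
  rw [criticalSet_iff_erase]
  constructor
  · rintro ⟨hS, hmin⟩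
    have hS' := (determining_iff hn hc).1 hS
    refine ⟨fun v hv hv1 => ?_, fun v hv => (hS' v (mem_compl.1 hv)).1, fun v hf => ?_⟩
    · exact mem_compl.1 hv1 (hS' v (mem_compl.1 hv)).2.2
    · by_contra! h
      simp only [mem_compl, not_not] at h
      exact hmin v h.1 ((determining_erase_iff hn hc hS).2 ⟨hf, h.2⟩)
  · intro hT
    have hS : Determining (cycGraph n) c S := by
      refine (determining_iff hn hc).2 fun v hv => ⟨hT.forced v (mem_compl.2 hv), ?_, ?_⟩
      · by_contra h
        exact hT.indep (v - 1) (mem_compl.2 h) (by simpa using mem_compl.2 hv)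
      · by_contra h
        exact hT.indep v (mem_compl.2 hv) (mem_compl.2 h)
    refine ⟨hS, fun w hw h => ?_⟩
    obtain ⟨hf, h1, h2⟩ := (determining_erase_iff hn hc hS).1 h
    rcases hT.dominating w hf with h' | h' | h' <;> exact mem_compl.1 h' ‹_›

lemma IsForcedIndepDom.mem_or_add_one_mem {T : Finset (Fin n)} (hT : IsForcedIndepDom c T)
    {v : Fin n} (hv : Forced c v) (h : ¬ Forced c (v - 1)) : v ∈ T ∨ v + 1 ∈ T := by
  rcases hT.dominating v hv with h' | h' | h'
  exacts [Or.inl h', absurd (hT.forced _ h') h, Or.inr h']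

lemma IsForcedIndepDom.sub_one_mem_or_mem {T : Finset (Fin n)} (hT : IsForcedIndepDom c T)
    {v : Fin n} (hv : Forced c v) (h : ¬ Forced c (v + 1)) : v - 1 ∈ T ∨ v ∈ T := by
  rcases hT.dominating v hv with h' | h' | h'
  exacts [Or.inr h', Or.inl h', absurd (hT.forced _ h') h]

section IndepSet

variable {T : Finset (Fin n)}

lemma disjoint_map_addRight_one (hT : ∀ v ∈ T, v + 1 ∉ T) :
    Disjoint T (T.map (Equiv.addRight 1).toEmbedding) :=
  disjoint_left.2 fun v hv hv' =>
    hT (v - 1) (by simpa [sub_eq_add_neg] using mem_map_equiv.1 hv') (by simpa using hv)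

lemma two_mul_card_le_of_indep (hT : ∀ v ∈ T, v + 1 ∉ T) : 2 * T.card ≤ n := by
  have h := card_le_univ (T ∪ T.map (Equiv.addRight 1).toEmbedding)
  rw [card_union_of_disjoint (disjoint_map_addRight_one hT), card_map, Fintype.card_fin] at h
  omega

lemma exists_add_odd_mem_of_indep (hT : ∀ v ∈ T, v + 1 ∉ T) (hcard : 2 * T.card + 1 = n) :
    ∃ u : Fin n, ∀ j < T.card, u + ((2 * j + 1 : ℕ) : Fin n) ∈ T := by
  set T' := T.map (Equiv.addRight 1).toEmbedding
  obtain ⟨u, hu⟩ : ∃ u, (T ∪ T')ᶜ = {u} := by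
    rw [← card_eq_one, card_compl, card_union_of_disjoint (disjoint_map_addRight_one hT), card_map,
      Fintype.card_fin]
    omega
  have hcover : ∀ v, v ∉ T → v - 1 ∉ T → v = u := fun v h1 h2 => by
    rw [← mem_singleton, ← hu, mem_compl, mem_union, not_or, mem_map_equiv]
    exact ⟨h1, by simpa [sub_eq_add_neg] using h2⟩
  have huT : u ∉ T := fun h => by
    simpa [h] using (hu ▸ mem_singleton_self u : u ∈ (T ∪ T')ᶜ)
  refine ⟨u, fun j hj => ?_⟩
  induction j with
  | zero =>
    by_contra h
    exact add_natCast_ne_self one_pos (by omega) u (hcover _ h (by simpa using huT))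
  | succ j ih =>
    by_contra h
    refine add_natCast_ne_self (by omega) (by omega) u (hcover _ h ?_)
    have e : u + ((2 * (j + 1) + 1 : ℕ) : Fin n) - 1 = u + ((2 * j + 1 : ℕ) : Fin n) + 1 := by
      push_cast; ring
    rw [e]
    exact hT _ (ih (by omega))

end IndepSet

lemma exists_isForcedIndepDom_of_forall_forced (hn : 2 ≤ n) (hc : properColoring (cycGraph n) 3 c)
    (hforced : ∀ v, Forced c v) : ∃ T, IsForcedIndepDom c T ∧ 3 * T.card ≤ n := by
  obtain ⟨a, ha⟩ := exists_colorClass_card_le c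
  rw [Fintype.card_fin] at ha
  refine ⟨_, ⟨fun v hv hv1 => ?_, fun v _ => hforced v, fun v _ => ?_⟩, ha⟩
  · simp only [mem_filter, mem_univ, true_and] at hv hv1
    exact apply_ne_apply_add_one hn hc v (hv.trans hv1.symm)
  · simp only [mem_filter, mem_univ, true_and]
    have := fin3_eq_or_eq_or_eq a _ _ _ (apply_ne_apply_sub_one hn hc v).symm
      (apply_ne_apply_add_one hn hc v) (hforced v)
    tauto

section Greedy

variable (hfree : ∃ w, ¬ Forced c w)

include hfree in
lemma exists_not_forced_sub (v : Fin n) : ∃ k : ℕ, ¬ Forced c (v - ((k + 1 : ℕ) : Fin n)) := by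
  obtain ⟨w, hw⟩ := hfree
  refine ⟨(v - w - 1).val, ?_⟩
  rwa [Nat.cast_succ, Fin.cast_val_eq_self, sub_add_cancel, sub_sub_cancel]

def forcedBefore (v : Fin n) : ℕ := Nat.find (exists_not_forced_sub hfree v)

lemma forcedBefore_eq_zero_iff {v : Fin n} : forcedBefore hfree v = 0 ↔ ¬ Forced c (v - 1) := by
  simp [forcedBefore, Nat.find_eq_zero]

lemma forcedBefore_add_one_of_forced {v : Fin n} (hv : Forced c v) :
    forcedBefore hfree (v + 1) = forcedBefore hfree v + 1 := by
  have hshift (k : ℕ) : v + 1 - ((k + 1 + 1 : ℕ) : Fin n) = v - ((k + 1 : ℕ) : Fin n) := by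
    push_cast; ring
  have h₂ : ∃ k : ℕ, ¬ Forced c (v + 1 - ((k + 1 + 1 : ℕ) : Fin n)) := by
    simpa only [hshift] using exists_not_forced_sub hfree v
  rw [forcedBefore, Nat.find_comp_succ _ h₂ (by simpa using hv), forcedBefore,
    Nat.find_congr' fun {k} => by rw [hshift k]]

/-- `forcedBefore v` is the position of `v`, counted from `0`, in its maximal run of forced
vertices. In every run this takes the 2nd, 5th, 8th, … vertex, and also the last one when the run
has length `≡ 1 [MOD 3]`: `⌈L / 3⌉` vertices dominating a run of length `L`. -/
def greedySet : Finset (Fin n) :=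
  univ.filter fun v => Forced c v ∧
    (forcedBefore hfree v % 3 = 1 ∨ (forcedBefore hfree v % 3 = 0 ∧ ¬ Forced c (v + 1)))

lemma mem_greedySet {v : Fin n} : v ∈ greedySet hfree ↔ Forced c v ∧
    (forcedBefore hfree v % 3 = 1 ∨ (forcedBefore hfree v % 3 = 0 ∧ ¬ Forced c (v + 1))) := by
  simp [greedySet]

lemma greedySet_isForcedIndepDom : IsForcedIndepDom c (greedySet hfree) := by
  refine ⟨fun v hv hv1 => ?_, fun v hv => ((mem_greedySet hfree).1 hv).1, fun v hv => ?_⟩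
  · rw [mem_greedySet] at hv hv1
    have := forcedBefore_add_one_of_forced hfree hv.1
    have := hv.2.resolve_right fun h => h.2 hv1.1
    omega
  · simp only [mem_greedySet]
    have hmod : forcedBefore hfree v % 3 = 0 ∨ forcedBefore hfree v % 3 = 1 ∨
        forcedBefore hfree v % 3 = 2 := by omega
    rcases hmod with h | h | h
    · by_cases hv1 : Forced c (v + 1)
      · have := forcedBefore_add_one_of_forced hfree hv
        right; right; exact ⟨hv1, by omega⟩
      · left; exact ⟨hv, Or.inr ⟨h, hv1⟩⟩
    · left; exact ⟨hv, Or.inl h⟩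
    · have hv1 : Forced c (v - 1) := by
        by_contra h'
        rw [← forcedBefore_eq_zero_iff hfree] at h'
        omega
      have := forcedBefore_add_one_of_forced hfree hv1
      rw [sub_add_cancel] at this
      right; left; exact ⟨hv1, by omega⟩

lemma not_forced_add_three_of_mem_greedySet {t : Fin n} (ht : t ∈ greedySet hfree)
    (ht2 : t + 2 ∈ greedySet hfree) : ¬ Forced c (t + 3) := by
  rw [mem_greedySet] at ht ht2
  rw [show t + 2 + 1 = t + 3 by ring] at ht2
  suffices h : forcedBefore hfree (t + 2) % 3 = 0 from (ht2.2.resolve_left (by omega)).2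
  rw [← show t + 1 + 1 = t + 2 by ring]
  by_cases h1 : Forced c (t + 1)
  · rw [forcedBefore_add_one_of_forced hfree h1, forcedBefore_add_one_of_forced hfree ht.1]
    have := ht.2.resolve_right fun h => h.2 h1
    omega
  · rw [(forcedBefore_eq_zero_iff hfree).2 (by rwa [add_sub_cancel_right])]

lemma not_forced_add_one_of_mem_greedySet {t : Fin n} (ht : t ∈ greedySet hfree)
    (h : ¬ Forced c (t - 1)) : ¬ Forced c (t + 1) := by
  rw [mem_greedySet, (forcedBefore_eq_zero_iff hfree).2 h] at ht
  exact ht.2.resolve_left (by decide) |>.2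

end Greedy

/-- The constraints that a greedy set `{u + 1, u + 3, …, u + 4 M - 1}` on a cycle of length
`4 M + 1` imposes on the colours `x i = c (u + i)` are contradictory. -/
lemma false_of_alternating_greedy_colors (x : ℕ → Fin 3) {M : ℕ} (hM : 1 ≤ M)
    (hwrap : x (4 * M + 1) = x 0) (hproper : ∀ i, x i ≠ x (i + 1))
    (hforced : ∀ j < 2 * M, x (2 * j) ≠ x (2 * j + 2))
    (hfree : ∀ j, j + 1 < 2 * M → x (2 * j + 3) = x (2 * j + 5))
    (hgreedy : x (4 * M) = x 1 → x 1 = x 3) : False := by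
  have hodd : ∀ j < 2 * M, x (2 * j + 3) = x 0 := by
    have hup : ∀ j < 2 * M, x 3 = x (2 * j + 3) := by
      intro j hj
      induction j with
      | zero => rfl
      | succ j ih => rw [ih (by omega), hfree j (by omega)]; ring_nf
    intro j hj
    rw [← hup j hj, hup (2 * M - 1) (by omega), ← hwrap]
    congr 1
    omega
  have heven : ∀ j < 2 * M, x (2 * j + 2) ≠ x 0 := fun j hj => by
    rw [← hodd j hj]; exact hproper _
  -- the even positions alternate between the two colours other than `x 0`
  have halt : ∀ m < M, x (4 * m + 2) = x 2 := by
    intro m hm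
    induction m with
    | zero => rfl
    | succ m ih =>
      rw [← ih (by omega)]
      have h1 : x (4 * m + 4) ≠ x 0 := by convert heven (2 * m + 1) (by omega) using 2; ring
      refine fin3_eq_of_ne (x 0) (x (4 * m + 4)) _ _ h1.symm ?_ ?_ ?_ ?_
      · convert heven (2 * m + 2) (by omega) using 2; ring
      · convert (hforced (2 * m + 2) (by omega)).symm using 2 <;> ring
      · convert heven (2 * m) (by omega) using 2; ring
      · convert hforced (2 * m + 1) (by omega) using 2 <;> ring
  have hlast : x (4 * M) = x 1 := by
    have h := hforced (2 * M - 1) (by omega)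
    rw [show 2 * (2 * M - 1) = 4 * (M - 1) + 2 by omega, halt (M - 1) (by omega),
      show 4 * (M - 1) + 2 + 2 = 4 * M by omega] at h
    refine fin3_eq_of_ne (x 0) (x 2) _ _ (heven 0 (by omega)).symm ?_ h.symm
      (hproper 0).symm (hproper 1)
    convert heven (2 * M - 1) (by omega) using 2
    omega
  exact hproper 0 ((hgreedy hlast).trans (hodd 0 (by omega))).symm

lemma two_mul_card_greedySet_add_three_le (hn : 2 ≤ n) (hn4 : n % 4 = 1)
    (hc : properColoring (cycGraph n) 3 c) (hfree : ∃ w, ¬ Forced c w) :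
    2 * (greedySet hfree).card + 3 ≤ n := by
  have hT := greedySet_isForcedIndepDom hfree
  have hle := two_mul_card_le_of_indep hT.indep
  by_contra! hlt
  obtain ⟨u, hu⟩ := exists_add_odd_mem_of_indep hT.indep (by omega)
  obtain ⟨M, hM⟩ : ∃ M, (greedySet hfree).card = 2 * M := ⟨(greedySet hfree).card / 2, by omega⟩
  have hn' : ((4 * M + 1 : ℕ) : Fin n) = 0 := by rw [show 4 * M + 1 = n by omega, Fin.natCast_self]
  refine false_of_alternating_greedy_colors (fun i => c (u + (i : ℕ))) (M := M) (by omega)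
    (by simp [hn']) (fun i => ?_) (fun j hj => ?_) (fun j hj => ?_) (fun h => ?_)
  · simpa [add_assoc] using apply_ne_apply_add_one hn hc (u + i)
  · convert hT.forced _ (hu j (by omega)) using 3 <;> push_cast <;> ring
  · have h := not_forced_add_three_of_mem_greedySet hfree (hu j (by omega))
      (by convert hu (j + 1) (by omega) using 1; push_cast; ring)
    simp only [Forced, not_not] at h
    convert h using 2 <;> push_cast <;> ring
  · have h' := not_forced_add_one_of_mem_greedySet hfree (hu 0 (by omega)) ?_
    · simp only [Forced, not_not] at h'
      convert h' using 2 <;> push_cast <;> ring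
    · simp only [Forced, not_not]
      convert h using 2
      · push_cast at hn' ⊢
        linear_combination -hn'
      · push_cast; ring

theorem exists_isForcedIndepDom_card_le (hn : Odd n) (hn3 : 3 ≤ n)
    (hc : properColoring (cycGraph n) 3 c) :
    ∃ T, IsForcedIndepDom c T ∧ 2 * T.card + 1 ≤ n ∧ (n % 4 = 1 → 2 * T.card + 3 ≤ n) := by
  have hodd := Nat.odd_iff.1 hn
  by_cases hfree : ∃ w, ¬ Forced c w
  · have hT := greedySet_isForcedIndepDom hfree
    have := two_mul_card_le_of_indep hT.indep
    exact ⟨_, hT, by omega, fun h4 => two_mul_card_greedySet_add_three_le (by omega) h4 hc hfree⟩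
  · push Not at hfree
    obtain ⟨T, hT, hcard⟩ := exists_isForcedIndepDom_of_forall_forced (by omega) hc hfree
    exact ⟨T, hT, by omega, fun _ => by omega⟩

lemma forced_natCast_succ_iff {m : ℕ} :
    Forced c ((m + 1 : ℕ) : Fin n) ↔ c (m : Fin n) ≠ c ((m + 2 : ℕ) : Fin n) := by
  rw [Forced, show ((m + 1 : ℕ) : Fin n) - 1 = m by push_cast; ring,
    show ((m + 1 : ℕ) : Fin n) + 1 = ((m + 2 : ℕ) : Fin n) by push_cast; ring]

def zigzag (m : ℕ) : Fin 3 := if m % 2 = 1 then 1 else if m % 4 = 0 then 0 else 2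

/-- `0, 1, 2, 1, 0, 1, 2, 1, …` with the last vertex recoloured `2`: its forced vertices are
isolated, except for one run of length 3 (`n ≡ 1 [MOD 4]`) or 4 (`n ≡ 3 [MOD 4]`) around `0`. -/
def zigzagColoring (n : ℕ) (v : Fin n) : Fin 3 := if v.val + 1 = n then 2 else zigzag v.val

lemma zigzagColoring_natCast {m : ℕ} (hm : m < n) :
    zigzagColoring n (m : Fin n) = if m + 1 = n then 2 else zigzag m := by
  simp [zigzagColoring, Fin.val_cast_of_lt hm]

lemma zigzagColoring_proper (hn : Odd n) (hn3 : 3 ≤ n) :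
    properColoring (cycGraph n) 3 (zigzagColoring n) := by
  have hodd := Nat.odd_iff.1 hn
  rw [properColoring_cycGraph_iff (by omega)]
  intro v
  rw [← Fin.cast_val_eq_self v, ← Nat.cast_add_one]
  have hv := v.isLt
  rcases Nat.lt_or_ge (v.val + 1) n with h | h
  · rw [zigzagColoring_natCast hv, zigzagColoring_natCast h]
    simp only [zigzag]
    split_ifs <;> first | decide | omega
  · rw [show v.val + 1 = n by omega, Fin.natCast_self, ← Nat.cast_zero, zigzagColoring_natCast hv,
      zigzagColoring_natCast (by omega), if_pos (by omega), if_neg (by omega)]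
    decide

lemma not_forced_zigzagColoring {m : ℕ} (hm : m % 2 = 0) (hm2 : 2 ≤ m) (hmn : m + 3 ≤ n) :
    ¬ Forced (zigzagColoring n) (m : Fin n) := by
  obtain ⟨m, rfl⟩ : ∃ m', m = m' + 1 := ⟨m - 1, by omega⟩
  rw [forced_natCast_succ_iff, not_not, zigzagColoring_natCast (by omega),
    zigzagColoring_natCast (by omega)]
  simp only [zigzag]
  split_ifs <;> first | rfl | omega

lemma forced_zigzagColoring {m : ℕ} (hm : m % 2 = 1) (hmn : m + 3 ≤ n) :
    Forced (zigzagColoring n) (m : Fin n) := by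
  obtain ⟨m, rfl⟩ : ∃ m', m = m' + 1 := ⟨m - 1, by omega⟩
  rw [forced_natCast_succ_iff, zigzagColoring_natCast (by omega), zigzagColoring_natCast (by omega)]
  simp only [zigzag]
  split_ifs <;> first | decide | omega

lemma forced_zigzagColoring_sub_two (hn4 : n % 4 = 3) :
    Forced (zigzagColoring n) ((n - 2 : ℕ) : Fin n) := by
  rw [show n - 2 = n - 3 + 1 by omega, forced_natCast_succ_iff, zigzagColoring_natCast (by omega),
    zigzagColoring_natCast (by omega)]
  simp only [zigzag]
  split_ifs <;> first | decide | omega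

section LowerBound

variable {T : Finset (Fin n)} (hT : IsForcedIndepDom (zigzagColoring n) T)
include hT

/-- An odd vertex `3 ≤ v ≤ n - 4` is forced and both its neighbours are free. -/
lemma natCast_mem_of_zigzagColoring {k : ℕ} (hk : 2 * k + 7 ≤ n) :
    ((2 * k + 3 : ℕ) : Fin n) ∈ T := by
  have h := hT.mem_or_add_one_mem (forced_zigzagColoring (m := 2 * k + 3) (by omega) (by omega))
    (by convert not_forced_zigzagColoring (n := n) (m := 2 * k + 2) (by omega) (by omega) (by omega)
          using 2
        push_cast; ring)
  rw [show ((2 * k + 3 : ℕ) : Fin n) + 1 = ((2 * k + 4 : ℕ) : Fin n) by push_cast; ring] at h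
  exact h.resolve_right fun h' =>
    not_forced_zigzagColoring (by omega) (by omega) (by omega) (hT.forced _ h')

lemma exists_mem_val_le_one_of_zigzagColoring (h5 : 5 ≤ n) : ∃ v ∈ T, v.val ≤ 1 := by
  have h := hT.sub_one_mem_or_mem (forced_zigzagColoring (m := 1) (by omega) (by omega))
    (by simpa [one_add_one_eq_two] using
      not_forced_zigzagColoring (m := 2) (by omega) (by omega) (by omega))
  rcases h with h | h
  · exact ⟨_, h, by simp⟩
  · exact ⟨_, h, by rw [Fin.val_cast_of_lt (by omega)]⟩

lemma exists_mem_sub_two_le_val_of_zigzagColoring (h5 : 5 ≤ n) (hn4 : n % 4 = 3) :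
    ∃ v ∈ T, n - 2 ≤ v.val := by
  have h := hT.mem_or_add_one_mem (forced_zigzagColoring_sub_two hn4)
    (by rw [show n - 2 = n - 3 + 1 by omega, Nat.cast_add_one, add_sub_cancel_right]
        exact not_forced_zigzagColoring (by omega) (by omega) (by omega))
  rcases h with h | h
  · exact ⟨_, h, by rw [Fin.val_cast_of_lt (by omega)]⟩
  · refine ⟨_, h, ?_⟩
    rw [← Nat.cast_add_one, Fin.val_cast_of_lt (by omega)]
    omega

theorem le_card_of_zigzagColoring (hn : Odd n) (h5 : 5 ≤ n) :
    n ≤ 2 * T.card + 3 ∧ (n % 4 = 3 → n ≤ 2 * T.card + 1) := by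
  have hodd := Nat.odd_iff.1 hn
  set O := (range ((n - 5) / 2)).image (2 * · + 3)
  have hO : O.card = (n - 5) / 2 := by
    rw [card_image_of_injective _ fun a b h => by omega, card_range]
  obtain ⟨x, hxT, hx⟩ := exists_mem_val_le_one_of_zigzagColoring hT h5
  have hOx : x.val ∉ O := by simp [O]; omega
  have hOT : insert x.val O ⊆ T.image Fin.val := by
    refine insert_subset (mem_image_of_mem _ hxT) fun m hm => ?_
    obtain ⟨k, hk, rfl⟩ := mem_image.1 hm
    exact mem_image.2 ⟨_, natCast_mem_of_zigzagColoring hT (by simp at hk; omega),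
      Fin.val_cast_of_lt (by simp at hk; omega)⟩
  have hcard := (card_le_card hOT).trans card_image_le
  rw [card_insert_of_notMem hOx, hO] at hcard
  refine ⟨by omega, fun hn4 => ?_⟩
  obtain ⟨y, hyT, hy⟩ := exists_mem_sub_two_le_val_of_zigzagColoring hT h5 hn4
  have hOy : y.val ∉ insert x.val O := by
    simp only [O, mem_insert, mem_image, mem_range, not_or, not_exists, not_and]
    exact ⟨by omega, fun k hk => by omega⟩
  have hcard' := (card_le_card (insert_subset (mem_image_of_mem _ hyT) hOT)).trans card_image_le
  rw [card_insert_of_notMem hOy, card_insert_of_notMem hOx, hO] at hcard'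
  omega

end LowerBound

end CycleCriticalSet

open CycleCriticalSet in
theorem stmt10 (n : ℕ) [NeZero n] (hn : Odd n) (h5 : 5 ≤ n) :
    IsLeast {m : ℕ | ∃ c : Fin n → Fin 3, properColoring (cycGraph n) 3 c ∧
      IsGreatest {s : ℕ | ∃ S : Finset (Fin n), CriticalSet (cycGraph n) c S ∧ S.card = s} m}
      (if n % 4 = 1 then (n + 3) / 2 else (n + 1) / 2) := by
  have hodd := Nat.odd_iff.1 hn
  have hcompl (T : Finset (Fin n)) : Tᶜ.card + T.card = n := by
    rw [card_compl_add_card, Fintype.card_fin]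
  have hzig := zigzagColoring_proper hn (by omega)
  refine ⟨⟨zigzagColoring n, hzig, ?_, ?_⟩, ?_⟩
  · obtain ⟨T, hT, hle, hle'⟩ := exists_isForcedIndepDom_card_le hn (by omega) hzig
    have hge := le_card_of_zigzagColoring hT hn h5
    refine ⟨Tᶜ, (criticalSet_iff (by omega) hzig).2 (by rwa [compl_compl]), ?_⟩
    have := hcompl T
    split_ifs <;> omega
  · rintro s ⟨S, hS, rfl⟩
    have hge := le_card_of_zigzagColoring ((criticalSet_iff (by omega) hzig).1 hS) hn h5
    have := hcompl S
    split_ifs <;> omega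
  · rintro m ⟨c, hc, -, hmax⟩
    obtain ⟨T, hT, hle, hle'⟩ := exists_isForcedIndepDom_card_le hn (by omega) hc
    have hm := hmax ⟨Tᶜ, (criticalSet_iff (by omega) hc).2 (by rwa [compl_compl]), rfl⟩
    have := hcompl T
    split_ifs <;> omega
end

section
/- No critical set can contain a colorful vertex together with all of its neighbors: if v is a vertex with |c({v} ∪ N(v))| = χ(G) and S is a determining set containing {v} ∪ N(v), then S \ {v} is also a determining set, so S is not minimal. -/
open SimpleGraph Finset

theorem stmt11 {V : Type*} [Fintype V] [DecidableEq V] (G : SimpleGraph V) (k : ℕ)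
    (hχ : G.chromaticNumber = k) (c : V → Fin k) (hc : properColoring G k c)
    (v : V) (hv : Colorful G c v)
    (S : Finset V) (hS : Determining G c S) (hvS : v ∈ S)
    (hN : ∀ w : V, G.Adj v w → w ∈ S) :
    Determining G c (S.erase v) ∧ ¬ CriticalSet G c S := by
  have hdet : Determining G c (S.erase v) := by
    intro c' hc' hagree
    have hnb : ∀ w : V, G.Adj v w → c' w = c w := by
      intro w hw
      exact hagree w (Finset.mem_erase.2 ⟨(G.ne_of_adj hw).symm, hN w hw⟩)
    have hcv : c' v = c v := by
      by_contra hne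
      obtain ⟨w, hw, hcw⟩ := hv (c' v)
      rcases hw with rfl | hadj
      · exact hne hcw.symm
      · exact hc' hadj (by rw [hnb w hadj, hcw])
    apply hS c' hc'
    intro w hwS
    by_cases h : w = v
    · rw [h]; exact hcv
    · exact hagree w (Finset.mem_erase.2 ⟨h, hwS⟩)
  refine ⟨hdet, fun hcrit => ?_⟩
  exact hcrit.2 (S.erase v) (Finset.erase_ssubset hvS) hdet
end

section
/- There exists a graph G that is critically uniform but not uniquely colorable; specifically, the graph obtained by attaching a pendant vertex to each vertex of a triangle K_3 has every critical set of size exactly 4, yet admits more than one proper 3-coloring up to permutation of colors. -/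
open SimpleGraph Finset

/-- The graph obtained by attaching a pendant vertex to each vertex of a triangle:
vertices `0,1,2` form a triangle; `3,4,5` are pendants attached to `0,1,2` resp. -/
def pendantTriangle : SimpleGraph (Fin 6) :=
  SimpleGraph.fromRel (fun i j =>
    (i = 0 ∧ j = 1) ∨ (i = 0 ∧ j = 2) ∨ (i = 1 ∧ j = 2) ∨
    (i = 0 ∧ j = 3) ∨ (i = 1 ∧ j = 4) ∨ (i = 2 ∧ j = 5))


section Aux

instance : DecidableRel pendantTriangle.Adj := fun i j =>
  decidable_of_iff _ (SimpleGraph.fromRel_adj _ i j).symm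

instance : DecidablePred (properColoring pendantTriangle 3) := fun c =>
  inferInstanceAs (Decidable (∀ v w, pendantTriangle.Adj v w → c v ≠ c w))

/-- The list of all proper 3-colorings of `pendantTriangle`. -/
def plist : List (Fin 6 → Fin 3) := [
![0,1,2,1,0,0],
![0,1,2,1,0,1],
![0,1,2,1,2,0],
![0,1,2,1,2,1],
![0,1,2,2,0,0],
![0,1,2,2,0,1],
![0,1,2,2,2,0],
![0,1,2,2,2,1],
![0,2,1,1,0,0],
![0,2,1,1,0,2],
![0,2,1,1,1,0],
![0,2,1,1,1,2],
![0,2,1,2,0,0],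
![0,2,1,2,0,2],
![0,2,1,2,1,0],
![0,2,1,2,1,2],
![1,0,2,0,1,0],
![1,0,2,0,1,1],
![1,0,2,0,2,0],
![1,0,2,0,2,1],
![1,0,2,2,1,0],
![1,0,2,2,1,1],
![1,0,2,2,2,0],
![1,0,2,2,2,1],
![1,2,0,0,0,1],
![1,2,0,0,0,2],
![1,2,0,0,1,1],
![1,2,0,0,1,2],
![1,2,0,2,0,1],
![1,2,0,2,0,2],
![1,2,0,2,1,1],
![1,2,0,2,1,2],
![2,0,1,0,1,0],
![2,0,1,0,1,2],
![2,0,1,0,2,0],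
![2,0,1,0,2,2],
![2,0,1,1,1,0],
![2,0,1,1,1,2],
![2,0,1,1,2,0],
![2,0,1,1,2,2],
![2,1,0,0,0,1],
![2,1,0,0,0,2],
![2,1,0,0,2,1],
![2,1,0,0,2,2],
![2,1,0,1,0,1],
![2,1,0,1,0,2],
![2,1,0,1,2,1],
![2,1,0,1,2,2]
]

/-- Determining with respect to the finite list of proper colorings. -/
def DeterminingL (c : Fin 6 → Fin 3) (L : List (Fin 6)) : Prop :=
  ∀ c' ∈ plist, (∀ v ∈ L, c' v = c v) → ∀ v : Fin 6, c' v = c v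

instance (c : Fin 6 → Fin 3) (L : List (Fin 6)) : Decidable (DeterminingL c L) :=
  List.decidableBAll _ _

set_option maxRecDepth 100000 in
lemma plist_sound : ∀ c ∈ plist, properColoring pendantTriangle 3 c := by
  intro c hc; fin_cases hc <;> decide

set_option maxRecDepth 100000 in
set_option maxHeartbeats 2000000 in
lemma plist_complete' : ∀ a b c d e f : Fin 3,
    properColoring pendantTriangle 3 ![a,b,c,d,e,f] → ![a,b,c,d,e,f] ∈ plist := by
  decide

lemma fn_repr (c : Fin 6 → Fin 3) : c = ![c 0, c 1, c 2, c 3, c 4, c 5] := by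
  funext v; fin_cases v <;> rfl

lemma plist_complete : ∀ c : Fin 6 → Fin 3, properColoring pendantTriangle 3 c → c ∈ plist := by
  intro c h
  have e := fn_repr c
  rw [e] at h ⊢
  exact plist_complete' _ _ _ _ _ _ h

set_option maxRecDepth 100000 in
lemma key01 : ∀ c ∈ plist, DeterminingL c [0,3,4,5] ∨ DeterminingL c [1,3,4,5] := by
  intro c hc; fin_cases hc <;> decide

set_option maxRecDepth 100000 in
lemma key02 : ∀ c ∈ plist, DeterminingL c [0,3,4,5] ∨ DeterminingL c [2,3,4,5] := by
  intro c hc; fin_cases hc <;> decide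

set_option maxRecDepth 100000 in
lemma key12 : ∀ c ∈ plist, DeterminingL c [1,3,4,5] ∨ DeterminingL c [2,3,4,5] := by
  intro c hc; fin_cases hc <;> decide

set_option maxRecDepth 100000 in
lemma keyA : ∀ c ∈ plist, ∀ p : Fin 6, 3 ≤ p.val →
    ∃ c' ∈ plist, c' p ≠ c p ∧ ∀ v : Fin 6, v ≠ p → c' v = c v := by
  intro c hc; fin_cases hc <;> decide

set_option maxRecDepth 100000 in
lemma keyB : ∀ c ∈ plist, ∃ c' ∈ plist,
    (∃ v : Fin 6, c' v ≠ c v) ∧ c' 3 = c 3 ∧ c' 4 = c 4 ∧ c' 5 = c 5 := by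
  intro c hc; fin_cases hc <;> decide

lemma determining_of_L (c : Fin 6 → Fin 3) (L : List (Fin 6)) (S : Finset (Fin 6))
    (hLS : ∀ v ∈ L, v ∈ S) (h : DeterminingL c L) :
    Determining pendantTriangle c S := by
  intro c' hp hag
  funext v
  exact h c' (plist_complete c' hp) (fun w hw => hag w (hLS w hw)) v

lemma not_mem_345 : ∀ i : Fin 6, i ∉ ({3,4,5} : Finset (Fin 6)) → i = 0 ∨ i = 1 ∨ i = 2 := by
  decide

end Aux

theorem stmt15 :
    (∀ c : Fin 6 → Fin 3, properColoring pendantTriangle 3 c →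
      ∀ S : Finset (Fin 6), CriticalSet pendantTriangle c S → S.card = 4) ∧
    ¬ UniquelyColorable pendantTriangle 3 := by
  constructor
  · intro c hc S hS
    obtain ⟨hdet, hmin⟩ := hS
    have hcp : c ∈ plist := plist_complete c hc
    -- all pendant vertices belong to S
    have hpend : ∀ p : Fin 6, 3 ≤ p.val → p ∈ S := by
      intro p hp3
      by_contra hpS
      obtain ⟨c', hc'p, hne, hagr⟩ := keyA c hcp p hp3
      have hceq : c' = c :=
        hdet c' (plist_sound c' hc'p)
          (fun v hv => hagr v (fun e => hpS (e ▸ hv)))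
      exact hne (congrFun hceq p)
    have h3 : (3 : Fin 6) ∈ S := hpend 3 (by decide)
    have h4 : (4 : Fin 6) ∈ S := hpend 4 (by decide)
    have h5 : (5 : Fin 6) ∈ S := hpend 5 (by decide)
    have hsub : ({3,4,5} : Finset (Fin 6)) ⊆ S := by
      intro x hx
      simp only [Finset.mem_insert, Finset.mem_singleton] at hx
      rcases hx with rfl | rfl | rfl
      · exact h3
      · exact h4
      · exact h5
    -- lower bound: S.card ≥ 4
    have hge : 4 ≤ S.card := by
      by_contra hlt
      push_neg at hlt
      have hc3 : ({3,4,5} : Finset (Fin 6)).card = 3 := by decide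
      have hSle : S.card ≤ ({3,4,5} : Finset (Fin 6)).card := by omega
      have hEq : ({3,4,5} : Finset (Fin 6)) = S :=
        Finset.eq_of_subset_of_card_le hsub hSle
      obtain ⟨c', hc'p, ⟨v, hv⟩, e3, e4, e5⟩ := keyB c hcp
      have hceq : c' = c := by
        refine hdet c' (plist_sound c' hc'p) ?_
        intro w hw
        rw [← hEq] at hw
        simp only [Finset.mem_insert, Finset.mem_singleton] at hw
        rcases hw with rfl | rfl | rfl
        · exact e3
        · exact e4
        · exact e5
      exact hv (congrFun hceq v)
    -- upper bound: S.card ≤ 4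
    have main : ∀ t u : Fin 6, t ∈ S → u ∈ S → u ∉ ({t,3,4,5} : Finset (Fin 6)) →
        DeterminingL c [t,3,4,5] → False := by
      intro t u ht hu hu' hdL
      have hT'sub : ({t,3,4,5} : Finset (Fin 6)) ⊆ S := by
        intro x hx
        simp only [Finset.mem_insert, Finset.mem_singleton] at hx
        rcases hx with rfl | rfl | rfl | rfl
        · exact ht
        · exact h3
        · exact h4
        · exact h5
      have hdT : Determining pendantTriangle c ({t,3,4,5} : Finset (Fin 6)) := by
        refine determining_of_L c [t,3,4,5] _ ?_ hdL
        intro v hv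
        simp only [List.mem_cons, List.not_mem_nil, or_false] at hv
        simp only [Finset.mem_insert, Finset.mem_singleton]
        exact hv
      exact hmin _ (Finset.ssubset_def.mpr ⟨hT'sub, fun hSsub => hu' (hSsub hu)⟩) hdT
    have hle : S.card ≤ 4 := by
      by_contra hgt
      push_neg at hgt
      have hcardsd : 2 ≤ (S \ ({3,4,5} : Finset (Fin 6))).card := by
        have := Finset.card_sdiff_of_subset hsub
        have hc3 : ({3,4,5} : Finset (Fin 6)).card = 3 := by decide
        omega
      have h1lt : 1 < (S \ ({3,4,5} : Finset (Fin 6))).card := by omega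
      obtain ⟨i, hi, j, hj, hij⟩ := Finset.one_lt_card.mp h1lt
      obtain ⟨hiS, hi345⟩ := Finset.mem_sdiff.mp hi
      obtain ⟨hjS, hj345⟩ := Finset.mem_sdiff.mp hj
      have hnot : ∀ x y : Fin 6, x ∉ ({3,4,5} : Finset (Fin 6)) → x ≠ y →
          x ∉ ({y,3,4,5} : Finset (Fin 6)) := by
        intro x y hx hxy hmem
        simp only [Finset.mem_insert, Finset.mem_singleton] at hx hmem ⊢
        rcases hmem with rfl | rfl | rfl | rfl
        · exact hxy rfl
        · exact hx (Or.inl rfl)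
        · exact hx (Or.inr (Or.inl rfl))
        · exact hx (Or.inr (Or.inr rfl))
      rcases not_mem_345 i hi345 with rfl | rfl | rfl <;>
        rcases not_mem_345 j hj345 with rfl | rfl | rfl
      · exact hij rfl
      · rcases key01 c hcp with h | h
        · exact main _ _ hiS hjS (hnot 1 0 hj345 hij.symm) h
        · exact main _ _ hjS hiS (hnot 0 1 hi345 hij) h
      · rcases key02 c hcp with h | h
        · exact main _ _ hiS hjS (hnot 2 0 hj345 hij.symm) h
        · exact main _ _ hjS hiS (hnot 0 2 hi345 hij) h
      · rcases key01 c hcp with h | h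
        · exact main _ _ hjS hiS (hnot 1 0 hi345 hij) h
        · exact main _ _ hiS hjS (hnot 0 1 hj345 hij.symm) h
      · exact hij rfl
      · rcases key12 c hcp with h | h
        · exact main _ _ hiS hjS (hnot 2 1 hj345 hij.symm) h
        · exact main _ _ hjS hiS (hnot 1 2 hi345 hij) h
      · rcases key02 c hcp with h | h
        · exact main _ _ hjS hiS (hnot 2 0 hi345 hij) h
        · exact main _ _ hiS hjS (hnot 0 2 hj345 hij.symm) h
      · rcases key12 c hcp with h | h
        · exact main _ _ hjS hiS (hnot 2 1 hi345 hij) h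
        · exact main _ _ hiS hjS (hnot 1 2 hj345 hij.symm) h
      · exact hij rfl
    omega
  · intro h
    obtain ⟨π, hπ⟩ := h ![0,1,2,1,0,0] ![0,1,2,2,0,0] (by decide) (by decide)
    have h1 := congrFun hπ 1
    have h3 := congrFun hπ 3
    simp only [Function.comp_apply] at h1 h3
    have e1 : (![0,1,2,2,0,0] : Fin 6 → Fin 3) 1 = 1 := rfl
    have e1' : (![0,1,2,1,0,0] : Fin 6 → Fin 3) 1 = 1 := rfl
    have e3 : (![0,1,2,2,0,0] : Fin 6 → Fin 3) 3 = 2 := rfl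
    have e3' : (![0,1,2,1,0,0] : Fin 6 → Fin 3) 3 = 1 := rfl
    rw [e1, e1'] at h1
    rw [e3, e3'] at h3
    rw [← h1] at h3
    exact absurd h3 (by decide)
end

section
/- In a uniquely colorable graph G, any critical set S for an optimal coloring c contains at most one vertex from each color class, i.e., |S| = |c(S)|. -/
open SimpleGraph Finset

theorem stmt16 {V : Type*} [Fintype V] [DecidableEq V] (G : SimpleGraph V) (k : ℕ)
    (hχ : G.chromaticNumber = k) (huc : UniquelyColorable G k)
    (c : V → Fin k) (hc : properColoring G k c)
    (S : Finset V) (hS : CriticalSet G c S) : (S.image c).card = S.card := by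
  apply Finset.card_image_of_injOn
  intro u hu v hv huv
  by_contra hne
  apply hS.2 (S.erase u) (Finset.erase_ssubset hu)
  intro c' hc' hagree
  apply hS.1 c' hc'
  intro w hw
  by_cases hwu : w = u
  · subst hwu
    obtain ⟨π, hπ⟩ := huc c c' hc hc'
    have hv' : c' v = c v := hagree v (Finset.mem_erase.mpr ⟨fun h => hne (h ▸ rfl), hv⟩)
    calc c' w = π (c w) := congrFun hπ w
    _ = π (c v) := by rw [huv]
    _ = c' v := (congrFun hπ v).symm
    _ = c v := hv'
    _ = c w := huv.symm
  · exact hagree w (Finset.mem_erase.mpr ⟨hwu, hw⟩)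
end

section
/- For the odd cycle C_n with the coloring c_0 defined by c_0(v_i) = i mod 2 for 0 ≤ i < n-1 and c_0(v_{n-1}) = 2, the set S = {v_0, v_1, ..., v_{n-2}} (all vertices except v_{n-1}) is a critical set of size n - 1. -/
open SimpleGraph Finset

lemma adj_iff {n : ℕ} [NeZero n] (hn : 2 ≤ n) (v w : Fin n) :
    (cycGraph n).Adj v w ↔
      v.val ≠ w.val ∧ ((v.val + 1) % n = w.val ∨ (w.val + 1) % n = v.val) := by
  have h1 : (1 : Fin n).val = 1 := by
    simp [Fin.val_one', Nat.mod_eq_of_lt (by omega : 1 < n)]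
  rw [cycGraph, fromRel_adj]
  simp [Fin.ext_iff, Fin.add_def, h1]

lemma succ_mod {n a : ℕ} (ha : a < n) :
    (a + 1) % n = if a + 1 = n then 0 else a + 1 := by
  split_ifs with h
  · rw [h, Nat.mod_self]
  · exact Nat.mod_eq_of_lt (by omega)

lemma proper_of_val {n : ℕ} [NeZero n] (hn : 2 ≤ n) (f : ℕ → ℕ) (hf : ∀ a, f a < 3)
    (h : ∀ a, a + 1 < n → f a ≠ f (a + 1)) (h0 : f (n - 1) ≠ f 0) :
    properColoring (cycGraph n) 3 (fun i => ⟨f i.val, hf i.val⟩) := by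
  intro v w hadj
  rw [adj_iff hn] at hadj
  obtain ⟨hne, hc | hc⟩ := hadj <;> rw [succ_mod (by omega)] at hc <;>
    split_ifs at hc with hh <;>
    simp only [ne_eq, Fin.mk.injEq]
  · have : v.val = n - 1 := by omega
    rw [this, ← hc]; exact h0
  · rw [← hc]; exact h v.val (by omega)
  · have : w.val = n - 1 := by omega
    rw [this, ← hc]; exact fun e => h0 e.symm
  · rw [← hc]; exact fun e => h w.val (by omega) e.symm

theorem stmt18 (n : ℕ) [NeZero n] (hn : Odd n) (h3 : 3 ≤ n) :
    CriticalSet (cycGraph n)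
      (fun i : Fin n => if i = (⟨n - 1, by omega⟩ : Fin n) then (2 : Fin 3)
        else (⟨i.val % 2, by omega⟩ : Fin 3))
      (Finset.univ.erase (⟨n - 1, by omega⟩ : Fin n)) ∧
    (Finset.univ.erase (⟨n - 1, by omega⟩ : Fin n)).card = n - 1 := by
  have hn2 : n % 2 = 1 := Nat.odd_iff.mp hn
  have hf : ∀ a : ℕ, (if a = n - 1 then 2 else a % 2) < 3 := by intro a; split_ifs <;> omega
  have hceq : (fun i : Fin n => if i = (⟨n - 1, by omega⟩ : Fin n) then (2 : Fin 3)
        else (⟨i.val % 2, by omega⟩ : Fin 3)) =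
      (fun i : Fin n => (⟨if i.val = n - 1 then 2 else i.val % 2, hf i.val⟩ : Fin 3)) := by
    funext i
    by_cases h : i.val = n - 1 <;> simp [Fin.ext_iff, h]
  rw [hceq]
  refine ⟨⟨?_, ?_⟩, ?_⟩
  · -- Determining
    intro c' hp hagr
    funext i
    by_cases hi : i.val = n - 1
    · have a1 : (cycGraph n).Adj i ⟨0, by omega⟩ := by
        rw [adj_iff (by omega)]
        refine ⟨by show i.val ≠ 0; omega, Or.inl ?_⟩
        show (i.val + 1) % n = 0
        rw [hi, succ_mod (by omega), if_pos (by omega)]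
      have a2 : (cycGraph n).Adj i ⟨n - 2, by omega⟩ := by
        rw [adj_iff (by omega)]
        refine ⟨by show i.val ≠ n - 2; omega, Or.inr ?_⟩
        show (n - 2 + 1) % n = i.val
        rw [succ_mod (by omega), if_neg (by omega)]
        omega
      have e1 : (c' ⟨0, by omega⟩).val = 0 := by
        rw [hagr ⟨0, by omega⟩ (Finset.mem_erase.mpr
          ⟨by simp only [ne_eq, Fin.mk.injEq]; omega, Finset.mem_univ _⟩)]
        show (if (0 : ℕ) = n - 1 then 2 else 0 % 2) = 0
        rw [if_neg (by omega)]
      have e2 : (c' ⟨n - 2, by omega⟩).val = 1 := by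
        rw [hagr ⟨n - 2, by omega⟩ (Finset.mem_erase.mpr
          ⟨by simp only [ne_eq, Fin.mk.injEq]; omega, Finset.mem_univ _⟩)]
        show (if n - 2 = n - 1 then 2 else (n - 2) % 2) = 1
        rw [if_neg (by omega)]
        omega
      have d1 : (c' i).val ≠ 0 := fun e => hp a1 (Fin.ext (by rw [e, e1]))
      have d2 : (c' i).val ≠ 1 := fun e => hp a2 (Fin.ext (by rw [e, e2]))
      have hlt := (c' i).isLt
      apply Fin.ext
      show (c' i).val = if i.val = n - 1 then 2 else i.val % 2
      rw [if_pos hi]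
      omega
    · exact hagr i (Finset.mem_erase.mpr
        ⟨by simpa [Fin.ext_iff] using hi, Finset.mem_univ _⟩)
  · -- minimality
    intro T hT hdet
    obtain ⟨j, hjS, hjT⟩ := Finset.exists_of_ssubset hT
    have hjn : j.val ≠ n - 1 := by
      simpa [Fin.ext_iff] using (Finset.mem_erase.mp hjS).1
    have hjlt := j.isLt
    have hg : ∀ a : ℕ, (if a = j.val then 2 else if a = n - 1 then
        (if j.val = 0 then 0 else if j.val = n - 2 then 1 else 2) else a % 2) < 3 := by
      intro a; split_ifs <;> omega
    have hprop := proper_of_val (n := n) (by omega)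
      (fun a => if a = j.val then 2 else if a = n - 1 then
        (if j.val = 0 then 0 else if j.val = n - 2 then 1 else 2) else a % 2) hg
      (by intro a ha; split_ifs <;> omega)
      (by simp only; split_ifs <;> omega)
    have heq := hdet _ hprop ?_
    · have hcf := congrArg Fin.val (congrFun heq j)
      simp [hjn] at hcf
      omega
    · intro v hv
      have hvS := hT.subset hv
      have hvn : v.val ≠ n - 1 := by
        simpa [Fin.ext_iff] using (Finset.mem_erase.mp hvS).1
      have hvj : v.val ≠ j.val := by
        intro h
        exact hjT ((Fin.ext h : v = j) ▸ hv)
      apply Fin.ext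
      show (if v.val = j.val then 2 else if v.val = n - 1 then _ else v.val % 2)
        = if v.val = n - 1 then 2 else v.val % 2
      rw [if_neg hvj, if_neg hvn, if_neg hvn]
  · rw [Finset.card_erase_of_mem (Finset.mem_univ _)]
    simp
end

section
/- Every determining set for any proper 3-coloring of an odd cycle C_n has cardinality at least ⌈n/2⌉ = (n+1)/2, since it cannot omit two consecutive vertices of the cycle. -/
open SimpleGraph Finset

lemma exists_third : ∀ a b : Fin 3, ∃ x : Fin 3, x ≠ a ∧ x ≠ b := by decide

theorem stmt19 (n : ℕ) [NeZero n] (hn : Odd n) (h3 : 3 ≤ n)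
    (c : Fin n → Fin 3) (hc : properColoring (cycGraph n) 3 c)
    (S : Finset (Fin n)) (hS : Determining (cycGraph n) c S) :
    (n + 1) / 2 ≤ S.card := by
  by_contra hlt
  push_neg at hlt
  -- there exist two consecutive vertices outside S
  have hkey : ∃ i : Fin n, i ∉ S ∧ i + 1 ∉ S := by
    by_contra hno
    push_neg at hno
    have hmap : ∀ i ∈ Sᶜ, i + 1 ∈ S := by
      intro i hi
      exact hno i (by simpa using hi)
    have hinj : Set.InjOn (fun i : Fin n => i + 1) (Sᶜ : Finset (Fin n)) := by
      intro a _ b _ h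
      exact add_right_cancel h
    have hcard := Finset.card_le_card_of_injOn (fun i => i + 1) hmap hinj
    have hcompl : Sᶜ.card = n - S.card := by
      rw [Finset.card_compl, Fintype.card_fin]
    have hle : S.card ≤ n := by
      simpa using (Finset.card_le_univ S)
    have h2 : n - S.card ≤ S.card := by rw [← hcompl]; exact hcard
    obtain ⟨m, hm⟩ := hn
    omega
  obtain ⟨i, hi, hi1⟩ := hkey
  have h10 : i + 1 ≠ i := by
    intro h
    have h1 : (1 : Fin n) = 0 :=
      add_left_cancel (a := i) (b := (1:Fin n)) (c := 0) (by simpa using h)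
    have hv : (1 : Fin n).val = 0 := by rw [h1]; rfl
    rw [Fin.val_one'] at hv
    rw [Nat.mod_eq_of_lt (by omega)] at hv
    exact one_ne_zero hv
  obtain ⟨x, hx1, hx2⟩ := exists_third (c (i - 1)) (c i)
  obtain ⟨y, hy1, hy2⟩ := exists_third x (c (i + 1 + 1))
  set c' : Fin n → Fin 3 := fun v => if v = i then x else if v = i + 1 then y else c v with hc'
  have hproper : properColoring (cycGraph n) 3 c' := by
    intro v w h
    obtain ⟨hne, hvw⟩ : v ≠ w ∧ (v + 1 = w ∨ w + 1 = v) := by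
      rcases h with ⟨hne, h | h⟩
      · exact ⟨hne, Or.inl h⟩
      · exact ⟨hne, Or.inr h⟩
    simp only [hc']
    by_cases hv : v = i
    · rw [if_pos hv]
      by_cases hw1 : w = i + 1
      · rw [if_neg (by rw [hw1]; exact h10), if_pos hw1]
        exact fun hxy => hy1 hxy.symm
      · have hw : w ≠ i := fun hh => hne (hv.trans hh.symm)
        rw [if_neg hw, if_neg hw1]
        have hww : w = i - 1 := by
          rcases hvw with h1 | h1
          · exact absurd (by rw [← h1, hv]) hw1
          · exact eq_sub_of_add_eq (by rw [h1, hv])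
        rw [hww]; exact hx1
    · rw [if_neg hv]
      by_cases hv1 : v = i + 1
      · rw [if_pos hv1]
        by_cases hw : w = i
        · rw [if_pos hw]; exact hy1
        · have hw1 : w ≠ i + 1 := fun hh => hne (hv1.trans hh.symm)
          rw [if_neg hw, if_neg hw1]
          have hww : w = i + 1 + 1 := by
            rcases hvw with h1 | h1
            · rw [← h1, hv1]
            · exact absurd (add_right_cancel (by rw [h1, hv1] : w + 1 = i + 1)) hw
          rw [hww]; exact hy2
      · rw [if_neg hv1]
        by_cases hw : w = i
        · rw [if_pos hw]
          have hvv : v = i - 1 := by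
            rcases hvw with h1 | h1
            · exact eq_sub_of_add_eq (by rw [h1, hw])
            · exact absurd (by rw [← h1, hw]) hv1
          rw [hvv]; exact hx1.symm
        · by_cases hw1 : w = i + 1
          · rw [if_neg hw, if_pos hw1]
            rcases hvw with h1 | h1
            · exact absurd (add_right_cancel (by rw [h1, hw1] : v + 1 = i + 1)) hv
            · have hvv : v = i + 1 + 1 := by rw [← h1, hw1]
              rw [hvv]; exact hy2.symm
          · rw [if_neg hw, if_neg hw1]
            exact hc h
  have hagree : ∀ v ∈ S, c' v = c v := by
    intro v hv
    have h1 : v ≠ i := fun h => hi (h ▸ hv)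
    have h2 : v ≠ i + 1 := fun h => hi1 (h ▸ hv)
    simp only [hc', if_neg h1, if_neg h2]
  have heq := hS c' hproper hagree
  have : c' i = c i := congrFun heq i
  rw [hc'] at this
  simp only [if_pos rfl] at this
  exact hx2 this
end
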